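/- Let Γ be a locally finite simple graph, F a field and λ ∈ F. Suppose that for some vertex v ∉ S_{F,λ}(Γ) every (F,λ)-propagator of Γ with respect to v has finite support. Then for every vertex u ∉ S_{F,λ}(Γ), every (F,λ)-propagator of Γ with respect to u has finite support, and moreover any two (F,λ)-propagators of Γ with respect to the same vertex u ∉ S_{F,λ}(Γ) agree at every vertex of V(Γ) ∖ S_{F,λ}(Γ). -/

import Mathlib

open Function

/-- The adjacency operator of a locally finite simple graph over a field `F`:
`(adjOp G f) w = ∑_{u ∈ Γ(w)} f u`. -/
def adjOp {V F : Type*} (G : SimpleGraph V) [G.LocallyFinite] [Field F]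
    (f : V → F) (w : V) : F :=
  ∑ u ∈ G.neighborFinset w, f u

/-- An eigenfunction of the adjacency operator corresponding to `l`:
a nonzero `f` with `A f = l • f`. -/
def IsEigenfun {V F : Type*} (G : SimpleGraph V) [G.LocallyFinite] [Field F]
    (l : F) (f : V → F) : Prop :=
  f ≠ 0 ∧ ∀ w, adjOp G f w = l * f w

/-- An `(F, l)`-propagator of `G` with respect to the vertex `v`. -/
def IsPropagator {V F : Type*} [DecidableEq V] (G : SimpleGraph V) [G.LocallyFinite] [Field F]
    (l : F) (v : V) (f : V → F) : Prop :=
  ∀ w, adjOp G f w - l * f w = if w = v then 1 else 0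

/-
Two propagators at the same vertex differ by an element of the kernel `K` of `A - λ` on `F^V`.
Adding `K` to a propagator at `v` shows that every element of `K` is finitely supported. Pairing
such an element against a propagator at `u` and using the symmetry of `A` shows that it vanishes
at every `u ∉ S`. Since the functions on `V` are the dual of the finitely supported ones, this
vanishing says that `δ_u = (A - λ) g` for a finitely supported `g`, and every other propagator
at `u` differs from `g` by an element of `K`.
-/

section
variable {V F : Type*} (G : SimpleGraph V) [G.LocallyFinite] [Field F] (l : F)

def adjOpSub : (V → F) →ₗ[F] (V → F) where
  toFun f w := adjOp G f w - l * f w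
  map_add' f g := by
    ext w
    simp only [adjOp, Pi.add_apply, Finset.sum_add_distrib]
    ring
  map_smul' c f := by
    ext w
    simp only [adjOp, Pi.smul_apply, smul_eq_mul, ← Finset.mul_sum, RingHom.id_apply]
    ring

lemma adjOpSub_apply (f : V → F) (w : V) : adjOpSub G l f w = adjOp G f w - l * f w := rfl

noncomputable def adjOpSubFinsupp : (V →₀ F) →ₗ[F] (V →₀ F) :=
  Finsupp.linearCombination F fun w =>
    ∑ x ∈ G.neighborFinset w, Finsupp.single x 1 - l • Finsupp.single w 1

variable {G l}

lemma isPropagator_iff [DecidableEq V] {v : V} {f : V → F} :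
    IsPropagator G l v f ↔ adjOpSub G l f = Pi.single v 1 := by
  simp only [IsPropagator, funext_iff, adjOpSub_apply, Pi.single_apply]

lemma coe_adjOpSubFinsupp [DecidableEq V] (g : V →₀ F) :
    ⇑(adjOpSubFinsupp G l g) = adjOpSub G l g := by
  induction g using Finsupp.induction_linear with
  | zero => simp
  | add g₁ g₂ h₁ h₂ => simp [h₁, h₂]
  | single a c =>
    ext x
    simp only [adjOpSubFinsupp, Finsupp.linearCombination_single, Finsupp.smul_apply,
      Finsupp.coe_sub, Finsupp.coe_finsetSum, Pi.sub_apply, Finset.sum_apply, smul_eq_mul,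
      Finsupp.single_apply, Finset.sum_ite_eq', Finset.sum_ite_eq, adjOpSub_apply, adjOp]
    have hmem : x ∈ G.neighborFinset a ↔ a ∈ G.neighborFinset x := by
      simp only [SimpleGraph.mem_neighborFinset, G.adj_comm]
    simp_rw [hmem]
    split_ifs <;> subst_vars <;> simp_all [mul_comm]

/-- The symmetry of `A`: with respect to the pairing `⟨g, p⟩ = ∑ x, g x * p x` of finitely
supported with arbitrary functions, `A - l` is its own transpose. -/
lemma linearCombination_comp_adjOpSubFinsupp (p : V → F) :
    (Finsupp.linearCombination F p).comp (adjOpSubFinsupp G l) =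
      Finsupp.linearCombination F (adjOpSub G l p) := by
  ext w
  simp [adjOpSubFinsupp, adjOpSub_apply, adjOp]

lemma IsPropagator.sub_mem_ker [DecidableEq V] {u : V} {p q : V → F} (hp : IsPropagator G l u p)
    (hq : IsPropagator G l u q) : p - q ∈ LinearMap.ker (adjOpSub G l) := by
  rw [isPropagator_iff] at hp hq
  rw [LinearMap.mem_ker, map_sub, hp, hq, sub_self]

lemma IsPropagator.add_of_mem_ker [DecidableEq V] {v : V} {p h : V → F}
    (hp : IsPropagator G l v p) (hh : h ∈ LinearMap.ker (adjOpSub G l)) :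
    IsPropagator G l v (p + h) := by
  rw [isPropagator_iff] at hp ⊢
  rw [map_add, hp, LinearMap.mem_ker.mp hh, add_zero]

lemma finite_support_of_mem_ker [DecidableEq V] {v : V} {f₀ h : V → F}
    (hf₀ : IsPropagator G l v f₀)
    (hvfin : ∀ f : V → F, IsPropagator G l v f → (support f).Finite)
    (hh : h ∈ LinearMap.ker (adjOpSub G l)) : (support h).Finite := by
  have hsub : support h ⊆ support (f₀ + h) ∪ support f₀ := by
    simpa using support_sub (f₀ + h) f₀
  exact ((hvfin _ (hf₀.add_of_mem_ker hh)).union (hvfin _ hf₀)).subset hsub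

lemma apply_eq_zero_of_mem_ker_of_isPropagator [DecidableEq V] {h p : V → F} {u : V}
    (hh : h ∈ LinearMap.ker (adjOpSub G l)) (hfin : (support h).Finite)
    (hp : IsPropagator G l u p) : h u = 0 := by
  set g := Finsupp.ofSupportFinite h hfin
  have hg : adjOpSubFinsupp G l g = 0 := by
    apply DFunLike.coe_injective
    rw [coe_adjOpSubFinsupp, Finsupp.coe_zero]
    exact hh
  rw [isPropagator_iff] at hp
  calc h u = Finsupp.linearCombination F (Pi.single u 1) g := by
        rw [Finsupp.linearCombination_single_index, smul_eq_mul, mul_one]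
        rfl
    _ = 0 := by
        rw [← hp, ← linearCombination_comp_adjOpSubFinsupp, LinearMap.comp_apply, hg, map_zero]

lemma exists_finsupp_isPropagator [DecidableEq V] {u : V}
    (hker : ∀ h ∈ LinearMap.ker (adjOpSub G l), h u = 0) :
    ∃ g : V →₀ F, IsPropagator G l u g := by
  by_cases hmem : Finsupp.single u 1 ∈ LinearMap.range (adjOpSubFinsupp G l)
  · obtain ⟨g, hg⟩ := hmem
    refine ⟨g, isPropagator_iff.mpr ?_⟩
    rw [← coe_adjOpSubFinsupp, hg, Finsupp.single_eq_pi_single]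
  -- A functional on `V →₀ F` is a function on `V`; one killing the range of `A - l` lies in the
  -- kernel of `A - l`.
  obtain ⟨φ, hφu, hφ⟩ := Submodule.exists_le_ker_of_notMem hmem
  have hφ_eq : Finsupp.linearCombination F (fun x => φ (Finsupp.single x 1)) = φ := by
    ext; simp
  set h : V → F := fun x => φ (Finsupp.single x 1)
  have hh : h ∈ LinearMap.ker (adjOpSub G l) := by
    rw [LinearMap.range_le_ker_iff, ← hφ_eq, linearCombination_comp_adjOpSubFinsupp] at hφ
    ext w
    simpa using congr($hφ (Finsupp.single w 1))
  exact (hφu (hker h hh)).elim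

end

theorem stmt7 {V F : Type*} [DecidableEq V] (G : SimpleGraph V) [G.LocallyFinite] [Field F]
    (l : F) (v : V)
    (hv : ∃ f : V → F, IsPropagator G l v f)
    (hvfin : ∀ f : V → F, IsPropagator G l v f → (support f).Finite) :
    (∀ u : V, (∃ f : V → F, IsPropagator G l u f) →
      ∀ f : V → F, IsPropagator G l u f → (support f).Finite) ∧
    (∀ u : V, (∃ f : V → F, IsPropagator G l u f) →
      ∀ p q : V → F, IsPropagator G l u p → IsPropagator G l u q →
        ∀ w : V, (∃ f : V → F, IsPropagator G l w f) → p w = q w) := by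
  obtain ⟨f₀, hf₀⟩ := hv
  have hvanish : ∀ h ∈ LinearMap.ker (adjOpSub G l), ∀ w : V,
      (∃ f : V → F, IsPropagator G l w f) → h w = 0 := fun h hh w ⟨p, hp⟩ =>
    apply_eq_zero_of_mem_ker_of_isPropagator hh (finite_support_of_mem_ker hf₀ hvfin hh) hp
  refine ⟨fun u hu f hf => ?_, fun u _ p q hp hq w hw => ?_⟩
  · obtain ⟨g, hg⟩ := exists_finsupp_isPropagator fun h hh => hvanish h hh u hu
    have hfg := finite_support_of_mem_ker hf₀ hvfin (hf.sub_mem_ker hg)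
    refine (hfg.union g.hasFiniteSupport).subset ?_
    simpa using support_add (f - ⇑g) g
  · exact sub_eq_zero.mp (hvanish _ (hp.sub_mem_ker hq) w hw)
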